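/- arXiv:1305.5166 — 3 statements merged into one kernel-verified Lean document; each statement's English description precedes it below -/
import Mathlib

section
/- For any prime power q ≥ 4 and any integer k ≥ 1, with g_k defined by the Garcia-Stichtenoth genus formulas, one has g_k ≤ q^{k-1}(q+1) - √q · q^{k/2}. -/
/-- Garcia–Stichtenoth tower genus upper bound:
`g_k ≤ q^{k-1}(q+1) - √q · q^{k/2}` for `q ≥ 4` a prime power and `k ≥ 1`. -/
theorem stmt1 (q k : ℕ) (hq : IsPrimePow q) (hq4 : 4 ≤ q) (hk : 1 ≤ k) (g : ℝ)
    (hodd : Odd k → g = (q : ℝ) ^ k + (q : ℝ) ^ (k - 1)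
      - (q : ℝ) ^ ((k + 1) / 2) - 2 * (q : ℝ) ^ ((k - 1) / 2) + 1)
    (heven : Even k → g = (q : ℝ) ^ k + (q : ℝ) ^ (k - 1)
      - (1 / 2) * (q : ℝ) ^ (k / 2 + 1) - (3 / 2) * (q : ℝ) ^ (k / 2)
      - (q : ℝ) ^ (k / 2 - 1) + 1) :
    g ≤ (q : ℝ) ^ (k - 1) * ((q : ℝ) + 1) - Real.sqrt q * (q : ℝ) ^ ((k : ℝ) / 2) := by
  have hq4' : (4 : ℝ) ≤ (q : ℝ) := by exact_mod_cast hq4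
  have hqpos : (0 : ℝ) < (q : ℝ) := by linarith
  have hq1 : (1 : ℝ) ≤ (q : ℝ) := by linarith
  rcases Nat.even_or_odd k with he | ho
  · -- even case, k = 2n+2
    obtain ⟨m, hm⟩ := he
    obtain ⟨n, rfl⟩ : ∃ n, m = n + 1 := ⟨m - 1, by omega⟩
    subst hm
    rw [heven ⟨n + 1, rfl⟩]
    have e2 : (n + 1 + (n + 1)) / 2 = n + 1 := by omega
    have e3 : (n + 1 + (n + 1)) = 2 * n + 2 := by omega
    have e1 : (2 * n + 2) - 1 = 2 * n + 1 := by omega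
    rw [e2, e3, e1]
    have e4 : (n + 1 - 1 : ℕ) = n := by omega
    rw [e4]
    have hs : ((q : ℝ)) ^ (((2 * n + 2 : ℕ) : ℝ) / 2) = (q : ℝ) ^ (n + 1 : ℕ) := by
      rw [← Real.rpow_natCast (q : ℝ) (n + 1)]
      congr 1
      push_cast; ring
    rw [hs]
    have hsq : Real.sqrt q ≤ (q : ℝ) / 2 := by
      rw [show (q : ℝ) / 2 = Real.sqrt (((q : ℝ) / 2) ^ 2) from
        (Real.sqrt_sq (by positivity)).symm]
      exact Real.sqrt_le_sqrt (by nlinarith)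
    have hpn : (1 : ℝ) ≤ (q : ℝ) ^ n := one_le_pow₀ hq1
    have hpn1 : (0 : ℝ) < (q : ℝ) ^ (n + 1) := by positivity
    have key : Real.sqrt q * (q : ℝ) ^ (n + 1) ≤ ((q : ℝ) / 2) * (q : ℝ) ^ (n + 1) :=
      mul_le_mul_of_nonneg_right hsq (le_of_lt hpn1)
    have h1 : (q : ℝ) ^ (2 * n + 2) = (q : ℝ) ^ (2 * n + 1) * q := by ring
    have h2 : (q : ℝ) ^ (n + 2) = (q : ℝ) ^ (n + 1) * q := by ring
    have h3 : (q : ℝ) ^ (n + 1) = (q : ℝ) ^ n * q := by ring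
    nlinarith [pow_pos hqpos (2 * n + 1), pow_pos hqpos (n + 1), pow_pos hqpos n]
  · -- odd case, k = 2m+1
    obtain ⟨m, rfl⟩ := ho
    rw [hodd ⟨m, rfl⟩]
    have e1 : (2 * m + 1) - 1 = 2 * m := by omega
    have e2 : (2 * m + 1 + 1) / 2 = m + 1 := by omega
    have e3 : (2 * m + 1 - 1) / 2 = m := by omega
    rw [e2, e3, e1]
    have hs : Real.sqrt q * (q : ℝ) ^ (((2 * m + 1 : ℕ) : ℝ) / 2) = (q : ℝ) ^ (m + 1 : ℕ) := by
      rw [Real.sqrt_eq_rpow, ← Real.rpow_add hqpos, ← Real.rpow_natCast (q : ℝ) (m + 1)]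
      congr 1
      push_cast; ring
    rw [hs]
    have hpm : (1 : ℝ) ≤ (q : ℝ) ^ m := one_le_pow₀ hq1
    have h1 : (q : ℝ) ^ (2 * m + 1) = (q : ℝ) ^ (2 * m) * q := by ring
    nlinarith [pow_pos hqpos (2 * m), pow_pos hqpos m]
end

section
/- Suppose 0 < j ≤ d are integers, μ(j) and μ(d) are positive integers with μ(d) ≥ 2d - 1, μ(j) ≤ 2j - 1 whenever j ≤ q/2 + 1, and μ(j) ≤ 2j whenever j < (q+1+ε)/2, where additionally μ(d) ≥ 2d if d > q/2 + 1. Then under these hypotheses (which hold for the symmetric bilinear complexity μ^sym_q), for any j dividing properly into the allowed range one has μ(j)/j ≤ μ(d)/d. -/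
/-- Abstract version of Lemma 2.1: under the known values of the symmetric
bilinear complexity in the small range, `μ(j)/j ≤ μ(d)/d`. -/
theorem stmt15 (q : ℕ) (hq : IsPrimePow q) (hq2 : 2 ≤ q) (ε : ℝ) (hε : 0 ≤ ε)
    (j d : ℕ) (hj : 0 < j) (hjd : j ≤ d) (μj μd : ℕ)
    (hμj : 0 < μj) (hμd : 0 < μd)
    (h1 : 2 * d - 1 ≤ μd)
    (h2 : (j : ℝ) ≤ (q : ℝ) / 2 + 1 → μj ≤ 2 * j - 1)
    (h3 : (j : ℝ) < ((q : ℝ) + 1 + ε) / 2 → μj ≤ 2 * j)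
    (h4 : (q : ℝ) / 2 + 1 < (d : ℝ) → 2 * d ≤ μd)
    (hrange : if 4 ≤ q then (j : ℝ) < ((q : ℝ) + 1 + ε) / 2
      else (j : ℝ) ≤ (q : ℝ) / 2 + 1) :
    μj * d ≤ μd * j := by
  by_cases hcase : (j : ℝ) ≤ (q : ℝ) / 2 + 1
  · have hμj' := h2 hcase
    have e1 : (2 * j - 1) * d = 2 * (j * d) - d := by
      rw [Nat.sub_mul]; ring_nf
    have e2 : (2 * d - 1) * j = 2 * (j * d) - j := by
      rw [Nat.sub_mul]; ring_nf
    calc μj * d ≤ (2 * j - 1) * d := Nat.mul_le_mul_right d hμj'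
      _ = 2 * (j * d) - d := e1
      _ ≤ 2 * (j * d) - j := Nat.sub_le_sub_left hjd _
      _ = (2 * d - 1) * j := e2.symm
      _ ≤ μd * j := Nat.mul_le_mul_right j h1
  · push_neg at hcase
    have hdj : (j : ℝ) ≤ (d : ℝ) := by exact_mod_cast hjd
    have hd := h4 (lt_of_lt_of_le hcase hdj)
    split_ifs at hrange with h4q
    · have hμj' := h3 hrange
      calc μj * d ≤ 2 * j * d := Nat.mul_le_mul_right d hμj'
        _ = 2 * d * j := by ring
        _ ≤ μd * j := Nat.mul_le_mul_right j hd
    · linarith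
end

section
/- Let q be a prime power and t ≥ 1 an integer with q^t ≥ 9 a square, and suppose there are sequences of positive reals (g_s) and nonnegative reals (B_s) with g_s → ∞, g_{s+1}/g_s → 1, and t·B_s/g_s → q^{t/2} - 1. For n ∈ ℕ let s(n) be the least s with t·B_s - g_s ≥ 2n + 8 (which exists for large n). Then g_{s(n)} = 2n/(q^{t/2}-2) + o(n) and B_{s(n)} = (2n/t)(1 + 1/(q^{t/2}-2)) + o(n) as n → ∞. -/
/-!
Put `f = t·B - g`. The hypotheses give `f / g → d := √(q^t) - 2 > 0`, so `f → ∞` and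
`f (s+1) / f s → 1`. As `s(n)` is the first index at which `f` reaches `2n + 8`, we have
`f (s(n) - 1) < 2n + 8 ≤ f (s(n))`, and the slow growth of `f` forces `f (s(n)) ~ 2n`.
Then `g (s(n)) ~ 2n / d` and `B (s(n)) = (f + g)(s(n)) / t ~ (2n/t)(1 + 1/d)`.
-/

open Filter Asymptotics Topology

theorem tendsto_atTop_of_tendsto_comp_atTop {α : Type*} {l : Filter α} {f : ℕ → ℝ}
    {u : α → ℕ} (h : Tendsto (f ∘ u) l atTop) : Tendsto u l atTop := by
  rw [tendsto_atTop]
  intro S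
  obtain ⟨M, hM⟩ := ((Set.finite_Iic S).image f).bddAbove
  filter_upwards [h.eventually_gt_atTop M] with n hn
  by_contra! hlt
  exact (hM ⟨u n, Set.mem_Iic.2 hlt.le, rfl⟩).not_gt hn

section RatioLimits

variable {𝕜 : Type*} [NormedField 𝕜] {f g : ℕ → 𝕜} {d : 𝕜}

theorem tendsto_succ_div_self_of_tendsto_div (hd : d ≠ 0)
    (hfg : Tendsto (fun s => f s / g s) atTop (𝓝 d))
    (hg : Tendsto (fun s => g (s + 1) / g s) atTop (𝓝 1)) :
    Tendsto (fun s => f (s + 1) / f s) atTop (𝓝 1) := by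
  have hne : ∀ᶠ s in atTop, f s ≠ 0 ∧ g s ≠ 0 :=
    (hfg.eventually_ne hd).mono fun _ hs => div_ne_zero_iff.1 hs
  have hlim := ((hfg.comp (tendsto_add_atTop_nat 1)).mul hg).mul (hfg.inv₀ hd)
  rw [mul_one, mul_inv_cancel₀ hd] at hlim
  refine hlim.congr' ?_
  filter_upwards [hne, (tendsto_add_atTop_nat 1).eventually hne] with s ⟨hfs, hgs⟩ ⟨_, hgs'⟩
  simp only [Function.comp_apply, inv_div]
  field_simp

theorem tendsto_comp_div_of_tendsto_div {α : Type*} {l : Filter α} {u : α → ℕ} {w : α → 𝕜}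
    {a : 𝕜} (hd : d ≠ 0) (hfg : Tendsto (fun s => f s / g s) atTop (𝓝 d))
    (hu : Tendsto u l atTop) (hfu : Tendsto (fun n => f (u n) / w n) l (𝓝 a)) :
    Tendsto (fun n => g (u n) / w n) l (𝓝 (a / d)) := by
  have hlim := ((hfg.inv₀ hd).comp hu).mul hfu
  rw [inv_mul_eq_div] at hlim
  refine hlim.congr' ?_
  filter_upwards [hu.eventually (hfg.eventually_ne hd)] with n hn
  obtain ⟨hf, hg⟩ := div_ne_zero_iff.1 hn
  simp only [Function.comp_apply, inv_div]
  field_simp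

end RatioLimits

section FirstCrossing

variable {f x : ℕ → ℝ} {sn : ℕ → ℕ}

theorem tendsto_atTop_of_isLeast_le (hx : Tendsto x atTop atTop)
    (hsn : ∀ᶠ n in atTop, IsLeast {s | 1 ≤ s ∧ x n ≤ f s} (sn n)) : Tendsto sn atTop atTop :=
  tendsto_atTop_of_tendsto_comp_atTop <| tendsto_atTop_mono' _ (hsn.mono fun _ hn => hn.1.2) hx

theorem tendsto_div_of_isLeast_le (hf : Tendsto f atTop atTop)
    (hratio : Tendsto (fun s => f (s + 1) / f s) atTop (𝓝 1)) (hx : Tendsto x atTop atTop)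
    (hsn : ∀ᶠ n in atTop, IsLeast {s | 1 ≤ s ∧ x n ≤ f s} (sn n)) :
    Tendsto (fun n => f (sn n) / x n) atTop (𝓝 1) := by
  have hsn_top := tendsto_atTop_of_isLeast_le hx hsn
  have hpred : Tendsto (fun n => sn n - 1) atTop atTop := (tendsto_sub_atTop_nat 1).comp hsn_top
  have hupper_lim : Tendsto (fun n => f (sn n) / f (sn n - 1)) atTop (𝓝 1) := by
    refine (hratio.comp hpred).congr' ?_
    filter_upwards [hsn_top.eventually_ge_atTop 1] with n hn
    simp only [Function.comp_apply, Nat.sub_add_cancel hn]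
  have hlower : ∀ᶠ n in atTop, 1 ≤ f (sn n) / x n := by
    filter_upwards [hsn, hx.eventually_gt_atTop 0] with n hn hxn
    exact (one_le_div hxn).2 hn.1.2
  have hupper : ∀ᶠ n in atTop, f (sn n) / x n ≤ f (sn n) / f (sn n - 1) := by
    filter_upwards [hsn, hsn_top.eventually_ge_atTop 2, hpred.eventually (hf.eventually_gt_atTop 0)]
      with n hn hsn2 hpos
    have hbelow : f (sn n - 1) < x n := by
      by_contra! hle
      have := hn.2 ⟨by omega, hle⟩
      omega
    exact div_le_div_of_nonneg_left (hpos.trans (hbelow.trans_le hn.1.2)).le hpos hbelow.le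
  exact tendsto_of_tendsto_of_tendsto_of_le_of_le' tendsto_const_nhds hupper_lim hlower hupper

end FirstCrossing

theorem isLittleO_sub_mul_of_tendsto_div {u : ℕ → ℝ} {L : ℝ}
    (h : Tendsto (fun n => u n / n) atTop (𝓝 L)) :
    (fun n : ℕ => u n - L * n) =o[atTop] (fun n : ℕ => (n : ℝ)) := by
  refine isLittleO_of_tendsto' ?_ ?_
  · filter_upwards [eventually_ge_atTop 1] with n hn h0
    exact absurd h0 (by positivity)
  · have hlim := h.sub_const L
    rw [sub_self] at hlim
    refine hlim.congr' ?_
    filter_upwards [eventually_ge_atTop 1] with n hn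
    field_simp

theorem stmt19_general (q t : ℕ) (ht : 1 ≤ t)
    (hqt : 9 ≤ q ^ t)
    (g B : ℕ → ℝ)
    (hginf : Tendsto g atTop atTop)
    (hgratio : Tendsto (fun s => g (s + 1) / g s) atTop (nhds 1))
    (hB : Tendsto (fun s => (t : ℝ) * B s / g s) atTop
      (nhds (Real.sqrt ((q : ℝ) ^ t) - 1)))
    (sn : ℕ → ℕ) (N₀ : ℕ)
    (hsn : ∀ n ≥ N₀,
      IsLeast {s : ℕ | 1 ≤ s ∧ (t : ℝ) * B s - g s ≥ 2 * n + 8} (sn n)) :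
    (fun n : ℕ => g (sn n) - 2 * n / (Real.sqrt ((q : ℝ) ^ t) - 2))
        =o[atTop] (fun n : ℕ => (n : ℝ)) ∧
    (fun n : ℕ => B (sn n)
        - (2 * n / t) * (1 + 1 / (Real.sqrt ((q : ℝ) ^ t) - 2)))
        =o[atTop] (fun n : ℕ => (n : ℝ)) := by
  set d := Real.sqrt ((q : ℝ) ^ t) - 2
  have hd : 0 < d := by
    have : (3 : ℝ) ≤ Real.sqrt ((q : ℝ) ^ t) :=
      (Real.le_sqrt' (by norm_num)).2 (by exact_mod_cast (by norm_num : 3 ^ 2 ≤ 9).trans hqt)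
    linarith
  set f : ℕ → ℝ := fun s => t * B s - g s
  have hfg : Tendsto (fun s => f s / g s) atTop (𝓝 d) := by
    have hlim := hB.sub_const 1
    rw [show Real.sqrt ((q : ℝ) ^ t) - 1 - 1 = d by ring] at hlim
    refine hlim.congr' ?_
    filter_upwards [hginf.eventually_ne_atTop 0] with s hs
    simp only [f, sub_div, div_self hs]
  have hf : Tendsto f atTop atTop := by
    refine (hfg.pos_mul_atTop hd hginf).congr' ?_
    filter_upwards [hginf.eventually_ne_atTop 0] with s hs
    exact div_mul_cancel₀ _ hs
  have hlevel : Tendsto (fun n : ℕ => 2 * (n : ℝ) + 8) atTop atTop :=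
    tendsto_atTop_add_const_right _ 8 (tendsto_natCast_atTop_atTop.const_mul_atTop two_pos)
  have hsn' : ∀ᶠ n : ℕ in atTop, IsLeast {s | 1 ≤ s ∧ 2 * (n : ℝ) + 8 ≤ f s} (sn n) :=
    eventually_atTop.2 ⟨N₀, hsn⟩
  have hfsn : Tendsto (fun n => f (sn n) / n) atTop (𝓝 2) := by
    have hlim := (tendsto_div_of_isLeast_le hf (tendsto_succ_div_self_of_tendsto_div hd.ne' hfg
      hgratio) hlevel hsn').mul ((tendsto_const_div_atTop_nhds_zero_nat (8 : ℝ)).const_add 2)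
    rw [add_zero, one_mul] at hlim
    refine hlim.congr' ?_
    filter_upwards [eventually_ge_atTop 1] with n hn
    field_simp
  have hgsn : Tendsto (fun n => g (sn n) / n) atTop (𝓝 (2 / d)) :=
    tendsto_comp_div_of_tendsto_div hd.ne' hfg (tendsto_atTop_of_isLeast_le hlevel hsn') hfsn
  have hBsn : Tendsto (fun n => B (sn n) / n) atTop (𝓝 ((2 + 2 / d) / t)) := by
    refine ((hfsn.add hgsn).div_const t).congr fun n => ?_
    simp only [f]
    field_simp
    ring
  refine ⟨(isLittleO_sub_mul_of_tendsto_div hgsn).congr_left fun n => ?_,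
    (isLittleO_sub_mul_of_tendsto_div hBsn).congr_left fun n => ?_⟩ <;> ring

/-- Asymptotic analysis of the choice of step in the Shimura-curve family:
`g_{s(n)} = 2n/(q^{t/2}-2) + o(n)` and
`B_{s(n)} = (2n/t)(1 + 1/(q^{t/2}-2)) + o(n)`. -/
theorem stmt19 (q t : ℕ) (hq : IsPrimePow q) (ht : 1 ≤ t)
    (hsq : ∃ m : ℕ, q ^ t = m ^ 2) (hqt : 9 ≤ q ^ t)
    (g B : ℕ → ℝ) (hgpos : ∀ s, 0 < g s) (hBnn : ∀ s, 0 ≤ B s)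
    (hginf : Tendsto g atTop atTop)
    (hgratio : Tendsto (fun s => g (s + 1) / g s) atTop (nhds 1))
    (hB : Tendsto (fun s => (t : ℝ) * B s / g s) atTop
      (nhds (Real.sqrt ((q : ℝ) ^ t) - 1)))
    (sn : ℕ → ℕ) (N₀ : ℕ)
    (hsn : ∀ n ≥ N₀,
      IsLeast {s : ℕ | 1 ≤ s ∧ (t : ℝ) * B s - g s ≥ 2 * n + 8} (sn n)) :
    (fun n : ℕ => g (sn n) - 2 * n / (Real.sqrt ((q : ℝ) ^ t) - 2))
        =o[atTop] (fun n : ℕ => (n : ℝ)) ∧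
    (fun n : ℕ => B (sn n)
        - (2 * n / t) * (1 + 1 / (Real.sqrt ((q : ℝ) ^ t) - 2)))
        =o[atTop] (fun n : ℕ => (n : ℝ)) :=
  stmt19_general q t ht hqt g B hginf hgratio hB sn N₀ hsn
end
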